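/- (Proposition 1, semidefinite relaxation with ℓ₀ penalization.) Let A ∈ ℝ^{n×n} with columns a₁,…,aₙ, let ρ ≥ 0, and set Bᵢ = aᵢaᵢᵀ − ρI. Then φ(ρ) ≤ ψ(ρ), where φ(ρ) = max over unit vectors x ∈ ℝⁿ (‖x‖₂ = 1) of ∑_{i=1}^n ((aᵢᵀx)² − ρ)₊, and ψ(ρ) = sup over symmetric positive semidefinite X with Tr(X) = 1 of ∑_{i=1}^n Tr₊(X^{1/2} Bᵢ X^{1/2}), which also equals the supremum of ∑_{i=1}^n Tr(Pᵢ Bᵢ) over symmetric matrices X, P₁,…,Pₙ with Tr(X) = 1, X ⪰ 0 and X ⪰ Pᵢ ⪰ 0 for each i. -/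

import Mathlib

open Matrix

/-- The largest eigenvalue of a matrix, as the supremum of its (real) eigenvalues. -/
noncomputable def lambdaMax {n : ℕ} (M : Matrix (Fin n) (Fin n) ℝ) : ℝ :=
  sSup {t : ℝ | ∃ v : Fin n → ℝ, v ≠ 0 ∧ M.mulVec v = t • v}

open Classical in
/-- `card z` is the number of nonzero coefficients of the vector `z`. -/
noncomputable def card {n : ℕ} (z : Fin n → ℝ) : ℕ :=
  (Finset.univ.filter fun i => z i ≠ 0).card

open Classical in
/-- `trPlus M` is the sum of the positive parts of the eigenvalues of a symmetric matrix `M`. -/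
noncomputable def trPlus {n : ℕ} (M : Matrix (Fin n) (Fin n) ℝ) : ℝ :=
  if h : M.IsHermitian then ∑ i, max (h.eigenvalues i) 0 else 0

open Classical in
/-- `matSqrt X` is the positive semidefinite square root of a positive semidefinite matrix. -/
noncomputable def matSqrt {n : ℕ} (X : Matrix (Fin n) (Fin n) ℝ) : Matrix (Fin n) (Fin n) ℝ :=
  if h : X.PosSemidef then
    (h.1.eigenvectorUnitary : Matrix (Fin n) (Fin n) ℝ) *
      diagonal (Real.sqrt ∘ h.1.eigenvalues) *
      (star h.1.eigenvectorUnitary : Matrix (Fin n) (Fin n) ℝ)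
  else 0

namespace SDPaux
variable {n : ℕ}

local notation "Mat" => Matrix (Fin n) (Fin n) ℝ

lemma trPlus_eq {M : Mat} (hM : M.IsHermitian) :
    trPlus M = ∑ i, max (hM.eigenvalues i) 0 := by
  rw [trPlus, dif_pos hM]

lemma trPlus_nonneg (M : Mat) : 0 ≤ trPlus M := by
  rw [trPlus]
  split
  · exact Finset.sum_nonneg fun i _ => le_max_right _ _
  · exact le_rfl

lemma real_spectral {S : Mat} (hS : S.IsHermitian) :
    S = (hS.eigenvectorUnitary : Mat) * diagonal hS.eigenvalues *
      (star hS.eigenvectorUnitary : Mat) := by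
  simpa [RCLike.ofReal_real_eq_id] using hS.spectral_theorem

lemma star_mul_self_unitary {S : Mat} (hS : S.IsHermitian) :
    (star hS.eigenvectorUnitary : Mat) * (hS.eigenvectorUnitary : Mat) = 1 :=
  Unitary.coe_star_mul_self hS.eigenvectorUnitary

lemma mul_star_self_unitary {S : Mat} (hS : S.IsHermitian) :
    (hS.eigenvectorUnitary : Mat) * (star hS.eigenvectorUnitary : Mat) = 1 :=
  Unitary.coe_mul_star_self hS.eigenvectorUnitary

lemma trace_mul_diag (M : Mat) (d : Fin n → ℝ) :
    (M * diagonal d).trace = ∑ j, M j j * d j := by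
  simp [Matrix.trace, Matrix.diag, Matrix.mul_diagonal]

lemma psd_diag_nonneg {M : Mat} (hM : M.PosSemidef) (j : Fin n) : 0 ≤ M j j := by
  have := hM.dotProduct_mulVec_nonneg (Pi.single j 1)
  simpa [mulVec_single, dotProduct, Pi.single_apply, Finset.sum_ite_eq] using this

lemma trace_nonneg_of_psd {M : Mat} (hM : M.PosSemidef) : 0 ≤ M.trace :=
  Finset.sum_nonneg fun j _ => psd_diag_nonneg hM j

-- conjugation of diagonal PSD
lemma conj_diag_psd {S : Mat} (hS : S.IsHermitian) {f : Fin n → ℝ} (hf : ∀ j, 0 ≤ f j) :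
    ((hS.eigenvectorUnitary : Mat) * diagonal f * (star hS.eigenvectorUnitary : Mat)).PosSemidef := by
  have h1 : (diagonal f).PosSemidef := posSemidef_diagonal_iff.mpr hf
  have := h1.mul_mul_conjTranspose_same (hS.eigenvectorUnitary : Mat)
  simpa [Matrix.star_eq_conjTranspose] using this

lemma trace_conj_diag {S : Mat} (hS : S.IsHermitian) (f : Fin n → ℝ) :
    ((hS.eigenvectorUnitary : Mat) * diagonal f * (star hS.eigenvectorUnitary : Mat)).trace
      = ∑ j, f j := by
  rw [trace_mul_cycle, star_mul_self_unitary hS, Matrix.one_mul]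
  simp [Matrix.trace, Matrix.diag]

lemma sum_eigenvalues_eq_trace {S : Mat} (hS : S.IsHermitian) :
    ∑ j, hS.eigenvalues j = S.trace := by
  conv_rhs => rw [real_spectral hS]
  rw [trace_conj_diag hS]

end SDPaux

open Classical in
/-- The positive semidefinite square root (ported replacement). -/
noncomputable def Matrix.PosSemidef.sqrt {n : ℕ} {X : Matrix (Fin n) (Fin n) ℝ}
    (h : X.PosSemidef) : Matrix (Fin n) (Fin n) ℝ :=
  (h.1.eigenvectorUnitary : Matrix (Fin n) (Fin n) ℝ) *
    diagonal (Real.sqrt ∘ h.1.eigenvalues) *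
    (star h.1.eigenvectorUnitary : Matrix (Fin n) (Fin n) ℝ)

lemma Matrix.PosSemidef.posSemidef_sqrt {n : ℕ} {X : Matrix (Fin n) (Fin n) ℝ}
    (h : X.PosSemidef) : h.sqrt.PosSemidef :=
  SDPaux.conj_diag_psd h.1 (fun j => Real.sqrt_nonneg _)

lemma Matrix.PosSemidef.sqrt_mul_self {n : ℕ} {X : Matrix (Fin n) (Fin n) ℝ}
    (h : X.PosSemidef) : h.sqrt * h.sqrt = X := by
  have hs := SDPaux.real_spectral h.1
  have hUU := SDPaux.star_mul_self_unitary h.1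
  set U : Matrix (Fin n) (Fin n) ℝ := (h.1.eigenvectorUnitary : Matrix (Fin n) (Fin n) ℝ) with hU
  set d := h.1.eigenvalues with hd
  change U * diagonal (Real.sqrt ∘ d) * star U * (U * diagonal (Real.sqrt ∘ d) * star U) = X
  rw [show U * diagonal (Real.sqrt ∘ d) * star U * (U * diagonal (Real.sqrt ∘ d) * star U)
      = U * (diagonal (Real.sqrt ∘ d) * (star U * U) * diagonal (Real.sqrt ∘ d)) * star U by
    noncomm_ring, hUU, Matrix.mul_one, diagonal_mul_diagonal]
  conv_rhs => rw [hs]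
  refine congrArg (fun D => U * D * star U) (congrArg diagonal (funext fun j => ?_))
  exact Real.mul_self_sqrt (h.eigenvalues_nonneg j)

lemma Matrix.PosSemidef.sqrt_eq_self_of_idem {n : ℕ} {X : Matrix (Fin n) (Fin n) ℝ}
    (h : X.PosSemidef) (hXX : X * X = X) : h.sqrt = X := by
  have hs := SDPaux.real_spectral h.1
  have hUU := SDPaux.star_mul_self_unitary h.1
  have hUU' := SDPaux.mul_star_self_unitary h.1
  set U : Matrix (Fin n) (Fin n) ℝ := (h.1.eigenvectorUnitary : Matrix (Fin n) (Fin n) ℝ) with hU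
  set d := h.1.eigenvalues with hd
  have e0 : star U * X * U = diagonal d := by
    rw [hs, show star U * (U * diagonal d * star U) * U
      = (star U * U) * diagonal d * (star U * U) by noncomm_ring, hUU, Matrix.one_mul,
      Matrix.mul_one]
  have hD : diagonal d * diagonal d = diagonal d := by
    calc diagonal d * diagonal d = (star U * X * U) * (star U * X * U) := by rw [e0]
    _ = star U * (X * (U * star U) * X) * U := by noncomm_ring
    _ = diagonal d := by rw [hUU', Matrix.mul_one, hXX, e0]
  rw [diagonal_mul_diagonal] at hD
  change U * diagonal (Real.sqrt ∘ d) * star U = X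
  conv_rhs => rw [hs]
  refine congrArg (fun D => U * D * star U) (congrArg diagonal (funext fun j => ?_))
  have hj := congrFun (congrFun hD j) j
  rw [diagonal_apply_eq, diagonal_apply_eq] at hj
  have h01 : d j * (d j - 1) = 0 := by linarith
  rcases mul_eq_zero.mp h01 with h0 | h1
  · show Real.sqrt (d j) = d j
    rw [h0, Real.sqrt_zero]
  · have : d j = 1 := by linarith
    show Real.sqrt (d j) = d j
    rw [this, Real.sqrt_one]

namespace SDPaux
variable {n : ℕ}
local notation "Mat" => Matrix (Fin n) (Fin n) ℝ

/-- Core lemma A: for `0 ⪯ Q ⪯ 1` and `S` symmetric, `Tr(Q S) ≤ trPlus S`. -/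
lemma trace_mul_le_trPlus {S Q : Mat} (hS : S.IsHermitian) (hQ : Q.PosSemidef)
    (hQ1 : (1 - Q).PosSemidef) : (Q * S).trace ≤ trPlus S := by
  set U : Mat := (hS.eigenvectorUnitary : Mat) with hU
  set lam := hS.eigenvalues with hlam
  have hUU : star U * U = 1 := star_mul_self_unitary hS
  have hUU' : U * star U = 1 := mul_star_self_unitary hS
  have key : (Q * S).trace = ∑ j, (star U * Q * U) j j * lam j := by
    conv_lhs => rw [real_spectral hS]
    rw [show Q * (U * diagonal lam * star U) = Q * (U * diagonal lam) * star U by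
      noncomm_ring]
    rw [trace_mul_cycle, show star U * Q * (U * diagonal lam) = (star U * Q * U) * diagonal lam by
      noncomm_ring]
    rw [trace_mul_diag]
  rw [key, trPlus_eq hS]
  apply Finset.sum_le_sum
  intro j _
  have hc0 : 0 ≤ (star U * Q * U) j j := by
    have h := hQ.mul_mul_conjTranspose_same (star U)
    rw [Matrix.star_eq_conjTranspose, conjTranspose_conjTranspose] at h
    exact psd_diag_nonneg h j
  have hc1 : (star U * Q * U) j j ≤ 1 := by
    have h := hQ1.mul_mul_conjTranspose_same (star U)
    rw [Matrix.star_eq_conjTranspose, conjTranspose_conjTranspose] at h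
    have h2 := psd_diag_nonneg h j
    rw [← Matrix.star_eq_conjTranspose] at h2
    have h3 : star U * (1 - Q) * U = 1 - star U * Q * U := by
      rw [Matrix.mul_sub, Matrix.sub_mul, Matrix.mul_one, hUU]
    rw [h3] at h2
    have h4 : (1 - star U * Q * U) j j = 1 - (star U * Q * U) j j := by
      simp [Matrix.sub_apply, Matrix.one_apply]
    rw [h4] at h2; linarith
  rcases le_or_gt 0 (lam j) with h | h
  · calc (star U * Q * U) j j * lam j ≤ 1 * lam j := by nlinarith
    _ = lam j := one_mul _
    _ ≤ max (lam j) 0 := le_max_left _ _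
  · calc (star U * Q * U) j j * lam j ≤ 0 := mul_nonpos_of_nonneg_of_nonpos hc0 h.le
    _ ≤ max (lam j) 0 := le_max_right _ _

/-- Core lemma B: `trPlus S` is attained by a projection `Q`. -/
lemma exists_trace_eq_trPlus {S : Mat} (hS : S.IsHermitian) :
    ∃ Q : Mat, Q.PosSemidef ∧ (1 - Q).PosSemidef ∧ (Q * S).trace = trPlus S := by
  set U : Mat := (hS.eigenvectorUnitary : Mat) with hU
  set lam := hS.eigenvalues with hlam
  have hUU : star U * U = 1 := star_mul_self_unitary hS
  have hUU' : U * star U = 1 := mul_star_self_unitary hS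
  set e : Fin n → ℝ := fun j => if 0 ≤ lam j then 1 else 0 with he
  refine ⟨U * diagonal e * star U, ?_, ?_, ?_⟩
  · exact conj_diag_psd hS (fun j => by rw [he]; positivity)
  · have : (1 : Mat) - U * diagonal e * star U
        = U * diagonal (fun j => 1 - e j) * star U := by
      have : (diagonal (fun j => 1 - e j) : Mat) = 1 - diagonal e := by
        rw [← diagonal_one, diagonal_sub]
      rw [this, Matrix.mul_sub, Matrix.sub_mul, Matrix.mul_one, hUU']
    rw [this]
    refine conj_diag_psd hS (fun j => ?_)
    simp only [he]
    split <;> norm_num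
  · rw [trPlus_eq hS]
    conv_lhs => rw [real_spectral hS]
    rw [show U * diagonal e * star U * (U * diagonal lam * star U)
        = U * (diagonal e * (star U * U) * diagonal lam) * star U by noncomm_ring]
    rw [hUU, Matrix.mul_one, diagonal_mul_diagonal, trace_conj_diag hS]
    refine Finset.sum_congr rfl fun j _ => ?_
    rw [he]
    rcases le_or_gt 0 (lam j) with h | h
    · simp [h, max_eq_left h, ← hlam]
    · simp [not_le.mpr h, max_eq_right h.le, ← hlam]

lemma trace_psd_mul_nonneg {M N : Mat} (hM : M.PosSemidef) (hN : N.PosSemidef) :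
    0 ≤ (M * N).trace := by
  classical
  have hR := hM.posSemidef_sqrt
  have hRR : hM.sqrt * hM.sqrt = M := hM.sqrt_mul_self
  have : (hM.sqrt * N * hM.sqrt).trace = (M * N).trace := by
    rw [trace_mul_cycle, hRR]
  rw [← this]
  refine trace_nonneg_of_psd ?_
  have h := hN.mul_mul_conjTranspose_same hM.sqrt
  rwa [hR.isHermitian] at h

lemma trPlus_mono {S T : Mat} (hS : S.IsHermitian) (hT : T.IsHermitian)
    (h : (T - S).PosSemidef) : trPlus S ≤ trPlus T := by
  obtain ⟨Q, hQ, hQ1, hQS⟩ := exists_trace_eq_trPlus hS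
  have h1 : (Q * S).trace ≤ (Q * T).trace := by
    have h2 : 0 ≤ (Q * (T - S)).trace := trace_psd_mul_nonneg hQ h
    rw [Matrix.mul_sub, trace_sub] at h2
    linarith
  calc trPlus S = (Q * S).trace := hQS.symm
  _ ≤ (Q * T).trace := h1
  _ ≤ trPlus T := trace_mul_le_trPlus hT hQ hQ1

lemma trPlus_of_psd {M : Mat} (hM : M.PosSemidef) : trPlus M = M.trace := by
  rw [trPlus_eq hM.isHermitian, ← sum_eigenvalues_eq_trace hM.isHermitian]
  exact Finset.sum_congr rfl fun j _ => max_eq_left (hM.eigenvalues_nonneg j)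

end SDPaux

namespace SDPaux
variable {n : ℕ}
local notation "Mat" => Matrix (Fin n) (Fin n) ℝ

lemma vecMulVec_hermitian (x : Fin n → ℝ) : (vecMulVec x x).IsHermitian := by
  ext i j
  simp [conjTranspose_apply, vecMulVec_apply, mul_comm]

lemma vecMulVec_mulVec' (x y : Fin n → ℝ) :
    (vecMulVec x x) *ᵥ y = fun i => x i * (x ⬝ᵥ y) := by
  ext i
  simp [mulVec, vecMulVec_apply, dotProduct, Finset.mul_sum, mul_assoc]

lemma vecMulVec_psd (x : Fin n → ℝ) : (vecMulVec x x).PosSemidef := by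
  refine PosSemidef.of_dotProduct_mulVec_nonneg (vecMulVec_hermitian x) fun y => ?_
  rw [vecMulVec_mulVec', star_trivial]
  have : y ⬝ᵥ (fun i => x i * (x ⬝ᵥ y)) = (x ⬝ᵥ y) * (x ⬝ᵥ y) := by
    simp only [dotProduct, Finset.sum_mul]
    exact Finset.sum_congr rfl fun i _ => by ring
  rw [this]
  exact mul_self_nonneg _

lemma smul_one_psd {ρ : ℝ} (hρ : 0 ≤ ρ) : (ρ • (1 : Mat)).PosSemidef := by
  rw [smul_one_eq_diagonal]
  exact posSemidef_diagonal_iff.mpr fun j => hρ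

lemma smul_one_hermitian {ρ : ℝ} : (ρ • (1 : Mat)).IsHermitian := by
  ext i j
  simp [conjTranspose_apply, Matrix.one_apply, eq_comm]

lemma one_sub_psd {X : Mat} (hX : X.PosSemidef) (hTr : X.trace = 1) :
    ((1 : Mat) - X).PosSemidef := by
  have hXh := hX.isHermitian
  have hmu : ∀ j, hXh.eigenvalues j ≤ 1 := by
    intro j
    have h1 : ∑ k, hXh.eigenvalues k = 1 := by rw [sum_eigenvalues_eq_trace hXh, hTr]
    have h2 := Finset.single_le_sum (f := hXh.eigenvalues)
      (fun k _ => hX.eigenvalues_nonneg k) (Finset.mem_univ j)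
    linarith
  have key : (1 : Mat) - X = (hXh.eigenvectorUnitary : Mat) *
      diagonal (fun j => 1 - hXh.eigenvalues j) * (star hXh.eigenvectorUnitary : Mat) := by
    have h2 : (diagonal (fun j => 1 - hXh.eigenvalues j) : Mat)
        = 1 - diagonal hXh.eigenvalues := by
      rw [← diagonal_one, diagonal_sub]
    rw [h2, Matrix.mul_sub, Matrix.sub_mul, Matrix.mul_one, mul_star_self_unitary hXh,
      ← real_spectral hXh]
  rw [key]
  exact conj_diag_psd hXh fun j => by linarith [hmu j]

lemma conj_psd_herm {M C : Mat} (hM : M.PosSemidef) (hC : C.IsHermitian) :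
    (C * M * C).PosSemidef := by
  have h := hM.mul_mul_conjTranspose_same C
  rwa [hC] at h

lemma sandwich_hermitian {Y M : Mat} (hY : Y.IsHermitian) (hM : M.IsHermitian) :
    (Y * M * Y).IsHermitian := by
  have : (Y * M * Y)ᴴ = Yᴴ * Mᴴ * Yᴴ := by
    rw [conjTranspose_mul, conjTranspose_mul, Matrix.mul_assoc]
  rw [Matrix.IsHermitian, this, hY, hM]

/-- trPlus bound for the sandwiched matrix. -/
lemma trPlus_sandwich_le {X : Mat} (hX : X.PosSemidef) (hTr : X.trace = 1)
    {Bi : Mat} (b : Fin n → ℝ) {ρ : ℝ} (hρ : 0 ≤ ρ)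
    (hBi : Bi = vecMulVec b b - ρ • 1) :
    trPlus (hX.sqrt * Bi * hX.sqrt) ≤ b ⬝ᵥ b := by
  set Y := hX.sqrt with hYdef
  have hY := hX.posSemidef_sqrt
  have hYh : Y.IsHermitian := hY.isHermitian
  have hYt : Yᵀ = Y := by
    rw [← conjTranspose_eq_transpose_of_trivial, hYh]
  have hBih : Bi.IsHermitian := by
    rw [hBi]
    exact (vecMulVec_hermitian b).sub smul_one_hermitian
  set w : Fin n → ℝ := Y *ᵥ b with hw
  -- step: Y * vecMulVec b b * Y = vecMulVec w w
  have hconj : Y * vecMulVec b b * Y = vecMulVec w w := by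
    have hYs : ∀ a c, Y a c = Y c a := fun a c => by
      have h := congrFun (congrFun hYt c) a
      simpa using h
    ext i j
    simp only [Matrix.mul_apply, vecMulVec_apply, hw, mulVec, dotProduct]
    simp only [Finset.sum_mul, Finset.mul_sum]
    refine Finset.sum_congr rfl fun k _ => Finset.sum_congr rfl fun l _ => ?_
    rw [hYs k j]
    ring
  have hmono : trPlus (Y * Bi * Y) ≤ trPlus (vecMulVec w w) := by
    refine trPlus_mono (sandwich_hermitian hYh hBih) (vecMulVec_hermitian w) ?_
    have hdiff : vecMulVec w w - Y * Bi * Y = Y * (ρ • (1 : Mat)) * Y := by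
      rw [← hconj, hBi, Matrix.mul_sub, Matrix.sub_mul]
      abel
    rw [hdiff]
    exact conj_psd_herm (smul_one_psd hρ) hYh
  have htr : trPlus (vecMulVec w w) = w ⬝ᵥ w := by
    rw [trPlus_of_psd (vecMulVec_psd w)]
    simp [Matrix.trace, Matrix.diag, vecMulVec_apply, dotProduct]
  have hww : w ⬝ᵥ w = b ⬝ᵥ (X *ᵥ b) := by
    rw [hw, dotProduct_mulVec, ← hYt, vecMul_transpose, hYt, mulVec_mulVec, hX.sqrt_mul_self,
      dotProduct_comm]
  have hle : b ⬝ᵥ (X *ᵥ b) ≤ b ⬝ᵥ b := by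
    have h := (one_sub_psd hX hTr).dotProduct_mulVec_nonneg b
    rw [star_trivial, Matrix.sub_mulVec, dotProduct_sub, Matrix.one_mulVec] at h
    linarith
  calc trPlus (Y * Bi * Y) ≤ trPlus (vecMulVec w w) := hmono
  _ = w ⬝ᵥ w := htr
  _ = b ⬝ᵥ (X *ᵥ b) := hww
  _ ≤ b ⬝ᵥ b := hle

end SDPaux

namespace SDPaux
variable {n : ℕ}
local notation "Mat" => Matrix (Fin n) (Fin n) ℝ

lemma psd_trace_zero {M : Mat} (hM : M.PosSemidef) (h : M.trace = 0) : M = 0 := by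
  have hW := hM.posSemidef_sqrt
  have hWs : ∀ a c, hM.sqrt a c = hM.sqrt c a := fun a c => by
    have h1 : hM.sqrtᴴ = hM.sqrt := hW.isHermitian
    have := congrFun (congrFun h1 a) c
    simpa [conjTranspose_apply] using this.symm
  have htr : ∑ i, ∑ j, (hM.sqrt i j) ^ 2 = 0 := by
    have h2 : (hM.sqrt * hM.sqrt).trace = 0 := by rw [hM.sqrt_mul_self]; exact h
    rw [← h2]
    simp only [Matrix.trace, Matrix.diag, Matrix.mul_apply, sq]
    exact Finset.sum_congr rfl fun i _ => Finset.sum_congr rfl fun j _ => by rw [hWs j i]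
  have hz : ∀ i j, hM.sqrt i j = 0 := by
    intro i j
    have h3 : ∀ i ∈ Finset.univ, (0:ℝ) ≤ ∑ j, (hM.sqrt i j) ^ 2 :=
      fun i _ => Finset.sum_nonneg fun j _ => sq_nonneg _
    have h4 := (Finset.sum_eq_zero_iff_of_nonneg h3).mp htr i (Finset.mem_univ i)
    have h5 := (Finset.sum_eq_zero_iff_of_nonneg
      (fun j _ => sq_nonneg (hM.sqrt i j))).mp h4 j (Finset.mem_univ j)
    exact pow_eq_zero_iff (by norm_num) |>.mp h5
  have hW0 : hM.sqrt = 0 := by ext i j; exact hz i j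
  rw [← hM.sqrt_mul_self, hW0, Matrix.mul_zero]

lemma conjU_herm {S : Mat} (hS : S.IsHermitian) (f : Fin n → ℝ) :
    ((hS.eigenvectorUnitary : Mat) * diagonal f * (star hS.eigenvectorUnitary : Mat)).IsHermitian := by
  rw [Matrix.IsHermitian, conjTranspose_mul, conjTranspose_mul, diagonal_conjTranspose]
  rw [← Matrix.star_eq_conjTranspose, ← Matrix.star_eq_conjTranspose, star_star]
  simp [Matrix.mul_assoc, star_trivial]

lemma exists_Q_of_sandwich {X P : Mat} (hX : X.PosSemidef) (hP : P.PosSemidef)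
    (hXP : (X - P).PosSemidef) :
    ∃ Q : Mat, Q.PosSemidef ∧ ((1 : Mat) - Q).PosSemidef ∧
      ∀ M : Mat, (Q * (hX.sqrt * M * hX.sqrt)).trace = (P * M).trace := by
  have hY := hX.posSemidef_sqrt
  have hYh : hX.sqrt.IsHermitian := hY.isHermitian
  set Y := hX.sqrt with hYdef
  set U : Mat := (hYh.eigenvectorUnitary : Mat) with hUdef
  set d := hYh.eigenvalues with hddef
  have hUU : star U * U = 1 := star_mul_self_unitary hYh
  have hUU' : U * star U = 1 := mul_star_self_unitary hYh
  set e : Fin n → ℝ := fun j => if d j = 0 then 0 else (d j)⁻¹ with hedef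
  set p : Fin n → ℝ := fun j => if d j = 0 then 0 else 1 with hpdef
  set Z : Mat := U * diagonal e * star U with hZdef
  set Pi : Mat := U * diagonal p * star U with hPidef
  have hYspec : Y = U * diagonal d * star U := real_spectral hYh
  have hmul : ∀ f g : Fin n → ℝ, (U * diagonal f * star U) * (U * diagonal g * star U)
      = U * diagonal (fun j => f j * g j) * star U := by
    intro f g
    rw [show (U * diagonal f * star U) * (U * diagonal g * star U)
        = U * (diagonal f * (star U * U) * diagonal g) * star U by noncomm_ring,
      hUU, Matrix.mul_one, diagonal_mul_diagonal]
  have hed : ∀ j, e j * d j = p j := by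
    intro j
    simp only [hedef, hpdef]
    by_cases h : d j = 0
    · simp [h]
    · simp [h, inv_mul_cancel₀ h]
  have hde : ∀ j, d j * e j = p j := by
    intro j
    have := hed j; rw [mul_comm] at this; exact this
  have hpd : ∀ j, p j * d j = d j := by
    intro j
    simp only [hpdef]
    by_cases h : d j = 0 <;> simp [h]
  have hdp : ∀ j, d j * p j = d j := by
    intro j; have := hpd j; rw [mul_comm] at this; exact this
  have hpp : ∀ j, p j * p j = p j := by
    intro j; simp only [hpdef]; by_cases h : d j = 0 <;> simp [h]
  have hZY : Z * Y = Pi := by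
    rw [hYspec, hZdef, hmul, hPidef]
    congr 1
    · congr 1; exact congrArg diagonal (funext hed)
  have hYZ : Y * Z = Pi := by
    rw [hYspec, hZdef, hmul, hPidef]
    congr 1
    · congr 1; exact congrArg diagonal (funext hde)
  have hYPi : Y * Pi = Y := by
    conv_lhs => rw [hYspec, hPidef, hmul]
    conv_rhs => rw [hYspec]
    congr 1
    · congr 1; exact congrArg diagonal (funext hdp)
  have hPiY : Pi * Y = Y := by
    conv_lhs => rw [hYspec, hPidef, hmul]
    conv_rhs => rw [hYspec]
    congr 1
    · congr 1; exact congrArg diagonal (funext hpd)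
  have hPiPi : Pi * Pi = Pi := by
    rw [hPidef, hmul]
    congr 1
    · congr 1; exact congrArg diagonal (funext hpp)
  have hZh : Z.IsHermitian := conjU_herm hYh e
  have hPih : Pi.IsHermitian := conjU_herm hYh p
  have hp01 : ∀ j, 0 ≤ p j ∧ p j ≤ 1 := by
    intro j; constructor <;> (simp only [hpdef]; by_cases h : d j = 0 <;> simp [h])
  have h1Pi : ((1 : Mat) - Pi).PosSemidef := by
    have hkey : (1 : Mat) - Pi = U * diagonal (fun j => 1 - p j) * star U := by
      have h2 : (diagonal (fun j => 1 - p j) : Mat) = 1 - diagonal p := by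
        rw [← diagonal_one, diagonal_sub]
      rw [h2, Matrix.mul_sub, Matrix.sub_mul, Matrix.mul_one, hUU', hPidef]
    rw [hkey]
    exact conj_diag_psd hYh fun j => by linarith [(hp01 j).2]
  -- P * Pi = P and Pi * P = P
  set R : Mat := 1 - Pi with hRdef
  have hRh : R.IsHermitian := by
    rw [hRdef, Matrix.IsHermitian, conjTranspose_sub, conjTranspose_one, hPih]
  have hYR : Y * R = 0 := by
    rw [hRdef, Matrix.mul_sub, Matrix.mul_one, hYPi, sub_self]
  have hRY : R * Y = 0 := by
    rw [hRdef, Matrix.sub_mul, Matrix.one_mul, hPiY, sub_self]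
  have hRXR : R * X * R = 0 := by
    rw [← hX.sqrt_mul_self, ← hYdef,
      show R * (Y * Y) * R = (R * Y) * (Y * R) by noncomm_ring, hRY, Matrix.zero_mul]
  have hN : (R * P * R).PosSemidef := conj_psd_herm hP hRh
  have hN2 : (R * (X - P) * R).PosSemidef := conj_psd_herm hXP hRh
  have hsumZ : R * P * R + R * (X - P) * R = 0 := by
    rw [show R * P * R + R * (X - P) * R = R * X * R by noncomm_ring, hRXR]
  have htrN : (R * P * R).trace = 0 := by
    have h1 := trace_nonneg_of_psd hN
    have h2 := trace_nonneg_of_psd hN2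
    have h3 := congrArg Matrix.trace hsumZ
    rw [trace_add, trace_zero] at h3
    linarith
  have hRPR : R * P * R = 0 := psd_trace_zero hN htrN
  have hPR : P * R = 0 := by
    have hWW : hP.sqrt * hP.sqrt = P := hP.sqrt_mul_self
    have hWh : hP.sqrtᴴ = hP.sqrt := hP.posSemidef_sqrt.isHermitian
    have h1 : (hP.sqrt * R)ᴴ * (hP.sqrt * R) = R * P * R := by
      rw [conjTranspose_mul, hWh, hRh, show R * hP.sqrt * (hP.sqrt * R)
        = R * (hP.sqrt * hP.sqrt) * R by noncomm_ring, hWW]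
    have h2 : hP.sqrt * R = 0 := conjTranspose_mul_self_eq_zero.mp (h1.trans hRPR)
    calc P * R = hP.sqrt * (hP.sqrt * R) := by rw [← Matrix.mul_assoc, hWW]
    _ = 0 := by rw [h2, Matrix.mul_zero]
  have hPPi : P * Pi = P := by
    have hPi1R : Pi = 1 - R := by rw [hRdef, sub_sub_cancel]
    rw [hPi1R, Matrix.mul_sub, Matrix.mul_one, hPR, sub_zero]
  have hPiP : Pi * P = P := by
    have := congrArg conjTranspose hPPi
    rwa [conjTranspose_mul, hPih, hP.isHermitian] at this
  refine ⟨Z * P * Z, conj_psd_herm hP hZh, ?_, ?_⟩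
  · have hZXZ : Z * X * Z = Pi := by
      rw [← hX.sqrt_mul_self, ← hYdef,
        show Z * (Y * Y) * Z = (Z * Y) * (Y * Z) by noncomm_ring, hZY, hYZ, hPiPi]
    have hEq : (1 : Mat) - Z * P * Z = ((1 : Mat) - Pi) + Z * (X - P) * Z := by
      have h5 : Z * (X - P) * Z = Pi - Z * P * Z := by
        rw [show Z * (X - P) * Z = Z * X * Z - Z * P * Z by noncomm_ring, hZXZ]
      rw [h5]; abel
    rw [hEq]
    exact h1Pi.add (conj_psd_herm hXP hZh)
  · intro M
    have h6 : Z * P * Z * (Y * M * Y) = Z * P * (Pi * M * Y) := by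
      rw [show Z * P * Z * (Y * M * Y) = Z * P * ((Z * Y) * M * Y) by noncomm_ring, hZY]
    rw [h6]
    rw [show Z * P * (Pi * M * Y) = Z * (P * Pi) * M * Y by noncomm_ring, hPPi]
    rw [show Z * P * M * Y = Z * (P * M * Y) by noncomm_ring, trace_mul_comm,
      show P * M * Y * Z = P * M * (Y * Z) by noncomm_ring, hYZ,
      show P * M * Pi = P * (M * Pi) by noncomm_ring, ← Matrix.mul_assoc, trace_mul_comm,
      show Pi * (P * M) = Pi * P * M by noncomm_ring, hPiP]

end SDPaux

namespace SDPaux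
variable {n : ℕ}
local notation "Mat" => Matrix (Fin n) (Fin n) ℝ

lemma trace_sandwich_comm (Y Q C : Mat) :
    (Q * (Y * C * Y)).trace = (Y * Q * Y * C).trace := by
  rw [show Q * (Y * C * Y) = Q * (Y * C) * Y by noncomm_ring, trace_mul_comm,
    show Y * (Q * (Y * C)) = Y * Q * Y * C by noncomm_ring]

lemma trace_vecMulVec_mul (x : Fin n → ℝ) (C : Mat) :
    (vecMulVec x x * C).trace = x ⬝ᵥ (C *ᵥ x) := by
  simp only [Matrix.trace, Matrix.diag, Matrix.mul_apply, vecMulVec_apply, dotProduct,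
    mulVec, Finset.mul_sum]
  rw [Finset.sum_comm]
  exact Finset.sum_congr rfl fun k _ => Finset.sum_congr rfl fun i _ => by ring

lemma quad_form (b x : Fin n → ℝ) (ρ : ℝ) :
    x ⬝ᵥ ((vecMulVec b b - ρ • (1 : Mat)) *ᵥ x) = (b ⬝ᵥ x) ^ 2 - ρ * (x ⬝ᵥ x) := by
  rw [Matrix.sub_mulVec, dotProduct_sub, vecMulVec_mulVec']
  have h1 : x ⬝ᵥ (fun i => b i * (b ⬝ᵥ x)) = (b ⬝ᵥ x) ^ 2 := by
    simp only [dotProduct, Finset.sum_mul, sq]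
    exact Finset.sum_congr rfl fun i _ => by ring
  have h2 : x ⬝ᵥ ((ρ • (1 : Mat)) *ᵥ x) = ρ * (x ⬝ᵥ x) := by
    rw [Matrix.smul_mulVec, Matrix.one_mulVec, dotProduct_smul, smul_eq_mul]
  rw [h1, h2]

end SDPaux

open SDPaux in
/-- Proposition 1: `φ(ρ) ≤ ψ(ρ)`, where `ψ(ρ)` is the value of the
semidefinite relaxation, which can also be written as a semidefinite program in `(X, Pᵢ)`. -/
theorem sdp_relaxation_upper_bound {n : ℕ}
    (A : Matrix (Fin n) (Fin n) ℝ) (ρ : ℝ) (hρ : 0 ≤ ρ)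
    (B : Fin n → Matrix (Fin n) (Fin n) ℝ)
    (hB : ∀ i, B i = vecMulVec (fun j => A j i) (fun j => A j i) -
      ρ • (1 : Matrix (Fin n) (Fin n) ℝ)) :
    sSup {v : ℝ | ∃ x : Fin n → ℝ, ∑ i, (x i) ^ 2 = 1 ∧
        v = ∑ i, max (((fun j => A j i) ⬝ᵥ x) ^ 2 - ρ) 0} ≤
      sSup {v : ℝ | ∃ X : Matrix (Fin n) (Fin n) ℝ, X.PosSemidef ∧ X.trace = 1 ∧
        v = ∑ i, trPlus (matSqrt X * B i * matSqrt X)} ∧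
    sSup {v : ℝ | ∃ X : Matrix (Fin n) (Fin n) ℝ, X.PosSemidef ∧ X.trace = 1 ∧
        v = ∑ i, trPlus (matSqrt X * B i * matSqrt X)} =
      sSup {v : ℝ | ∃ (X : Matrix (Fin n) (Fin n) ℝ) (P : Fin n → Matrix (Fin n) (Fin n) ℝ),
        X.PosSemidef ∧ X.trace = 1 ∧ (∀ i, (P i).PosSemidef ∧ (X - P i).PosSemidef) ∧
        v = ∑ i, (P i * B i).trace} := by
  classical
  have hB' : ∀ i, (B i).IsHermitian := fun i => by
    rw [hB i]; exact (vecMulVec_hermitian _).sub smul_one_hermitian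
  set S0 : Set ℝ := {v : ℝ | ∃ x : Fin n → ℝ, ∑ i, (x i) ^ 2 = 1 ∧
        v = ∑ i, max (((fun j => A j i) ⬝ᵥ x) ^ 2 - ρ) 0} with hS0
  set S1 : Set ℝ := {v : ℝ | ∃ X : Matrix (Fin n) (Fin n) ℝ, X.PosSemidef ∧ X.trace = 1 ∧
        v = ∑ i, trPlus (matSqrt X * B i * matSqrt X)} with hS1
  set S2 : Set ℝ := {v : ℝ | ∃ (X : Matrix (Fin n) (Fin n) ℝ)
        (P : Fin n → Matrix (Fin n) (Fin n) ℝ),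
        X.PosSemidef ∧ X.trace = 1 ∧ (∀ i, (P i).PosSemidef ∧ (X - P i).PosSemidef) ∧
        v = ∑ i, (P i * B i).trace} with hS2
  -- upper bound for S1
  have hub1 : ∀ v ∈ S1, v ≤ ∑ i, (fun j => A j i) ⬝ᵥ (fun j => A j i) := by
    rintro v ⟨X, hX, hTr, rfl⟩
    rw [show matSqrt X = hX.sqrt from dif_pos hX]
    exact Finset.sum_le_sum fun i _ => trPlus_sandwich_le hX hTr _ hρ (hB i)
  -- S1 ⊆ S2
  have hsub : S1 ⊆ S2 := by
    rintro v ⟨X, hX, hTr, rfl⟩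
    have hYh := hX.posSemidef_sqrt.isHermitian
    choose Q hQpsd hQ1 hQtr using fun i =>
      exists_trace_eq_trPlus (sandwich_hermitian hYh (hB' i))
    refine ⟨X, fun i => hX.sqrt * Q i * hX.sqrt, hX, hTr, fun i => ⟨?_, ?_⟩, ?_⟩
    · exact conj_psd_herm (hQpsd i) hYh
    · have h : X - hX.sqrt * Q i * hX.sqrt = hX.sqrt * (1 - Q i) * hX.sqrt := by
        rw [Matrix.mul_sub, Matrix.sub_mul, Matrix.mul_one, hX.sqrt_mul_self]
      rw [h]; exact conj_psd_herm (hQ1 i) hYh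
    · rw [show matSqrt X = hX.sqrt from dif_pos hX]
      refine Finset.sum_congr rfl fun i _ => ?_
      rw [← hQtr i, trace_sandwich_comm]
  -- every element of S2 is below an element of S1
  have hub2 : ∀ v ∈ S2, ∃ w ∈ S1, v ≤ w := by
    rintro v ⟨X, P, hX, hTr, hPs, rfl⟩
    refine ⟨∑ i, trPlus (matSqrt X * B i * matSqrt X), ⟨X, hX, hTr, rfl⟩, ?_⟩
    rw [show matSqrt X = hX.sqrt from dif_pos hX]
    refine Finset.sum_le_sum fun i _ => ?_
    obtain ⟨Q, hQ, hQ1, hQtr⟩ := exists_Q_of_sandwich hX (hPs i).1 (hPs i).2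
    calc (P i * B i).trace = (Q * (hX.sqrt * B i * hX.sqrt)).trace := (hQtr (B i)).symm
    _ ≤ trPlus (hX.sqrt * B i * hX.sqrt) :=
      trace_mul_le_trPlus (sandwich_hermitian hX.posSemidef_sqrt.isHermitian (hB' i)) hQ hQ1
  rcases Nat.eq_zero_or_pos n with hn | hn
  · subst hn
    have e0 : S0 = ∅ := by
      rw [hS0, Set.eq_empty_iff_forall_notMem]
      rintro v ⟨x, hx, -⟩
      simp at hx
    have e1 : S1 = ∅ := by
      rw [hS1, Set.eq_empty_iff_forall_notMem]
      rintro v ⟨X, -, hTr, -⟩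
      simp [Matrix.trace] at hTr
    have e2 : S2 = ∅ := by
      rw [hS2, Set.eq_empty_iff_forall_notMem]
      rintro v ⟨X, -, -, hTr, -⟩
      simp [Matrix.trace] at hTr
    rw [e0, e1, e2]
    exact ⟨le_refl _, rfl⟩
  · have hnR : (n : ℝ) ≠ 0 := Nat.cast_ne_zero.mpr hn.ne'
    -- a point of S1
    have hX0 : ((n : ℝ)⁻¹ • (1 : Matrix (Fin n) (Fin n) ℝ)).PosSemidef :=
      smul_one_psd (by positivity)
    have hX0tr : ((n : ℝ)⁻¹ • (1 : Matrix (Fin n) (Fin n) ℝ)).trace = 1 := by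
      rw [Matrix.trace_smul, Matrix.trace_one]
      simp [Fintype.card_fin]
      field_simp
    have hmem0 : (∑ i, trPlus (matSqrt ((n : ℝ)⁻¹ • (1 : Matrix (Fin n) (Fin n) ℝ)) * B i *
        matSqrt ((n : ℝ)⁻¹ • (1 : Matrix (Fin n) (Fin n) ℝ)))) ∈ S1 :=
      ⟨_, hX0, hX0tr, rfl⟩
    have hv0 : (0:ℝ) ≤ ∑ i, trPlus (matSqrt ((n : ℝ)⁻¹ • (1 : Matrix (Fin n) (Fin n) ℝ)) * B i *
        matSqrt ((n : ℝ)⁻¹ • (1 : Matrix (Fin n) (Fin n) ℝ))) :=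
      Finset.sum_nonneg fun i _ => trPlus_nonneg _
    have hbdd1 : BddAbove S1 := ⟨_, fun v hv => hub1 v hv⟩
    have hbdd2 : BddAbove S2 := ⟨_, fun v hv => by
      obtain ⟨w, hw, hvw⟩ := hub2 v hv
      exact hvw.trans (hub1 w hw)⟩
    have hne1 : S1.Nonempty := ⟨_, hmem0⟩
    have hsup1 : (0:ℝ) ≤ sSup S1 := hv0.trans (le_csSup hbdd1 hmem0)
    constructor
    · refine Real.sSup_le ?_ hsup1
      rintro v ⟨x, hx, rfl⟩
      have hXpsd := vecMulVec_psd x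
      have hXtr : (vecMulVec x x).trace = 1 := by
        rw [← hx]
        simp only [Matrix.trace, Matrix.diag, vecMulVec_apply, sq]
      have hXX : vecMulVec x x * vecMulVec x x = vecMulVec x x := by
        ext i j
        simp only [Matrix.mul_apply, vecMulVec_apply]
        have : ∑ k, x i * x k * (x k * x j) = (x i * x j) * ∑ k, (x k)^2 := by
          rw [Finset.mul_sum]
          exact Finset.sum_congr rfl fun k _ => by ring
        rw [this, hx, mul_one]
      have hms : matSqrt (vecMulVec x x) = vecMulVec x x := by
        rw [show matSqrt (vecMulVec x x) = hXpsd.sqrt from dif_pos hXpsd]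
        exact hXpsd.sqrt_eq_self_of_idem hXX
      refine le_trans (Finset.sum_le_sum fun i _ => ?_)
        (le_csSup hbdd1 ⟨vecMulVec x x, hXpsd, hXtr, rfl⟩)
      rw [hms]
      set X := vecMulVec x x with hXdef
      refine max_le ?_ (trPlus_nonneg _)
      have hH : (X * B i * X).IsHermitian :=
        sandwich_hermitian hXpsd.isHermitian (hB' i)
      have h1 : (X * (X * B i * X)).trace ≤ trPlus (X * B i * X) :=
        trace_mul_le_trPlus hH hXpsd (one_sub_psd hXpsd hXtr)
      have h2 : X * (X * B i * X) = X * B i * X := by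
        rw [show X * (X * B i * X) = (X * X) * B i * X by noncomm_ring, hXX]
      have h3 : (X * B i * X).trace = (X * B i).trace := by
        rw [trace_mul_cycle, hXX]
      have h4 : (X * B i).trace = ((fun j => A j i) ⬝ᵥ x) ^ 2 - ρ := by
        rw [hXdef, trace_vecMulVec_mul, hB i, quad_form]
        have : x ⬝ᵥ x = 1 := by
          rw [← hx]; simp [dotProduct, sq]
        rw [this, mul_one]
      rw [h2, h3, h4] at h1
      exact h1
    · refine le_antisymm (csSup_le_csSup hbdd2 hne1 hsub) ?_
      refine Real.sSup_le ?_ hsup1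
      intro v hv
      obtain ⟨w, hw, hvw⟩ := hub2 v hv
      exact hvw.trans (le_csSup hbdd1 hw)
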